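/- arXiv:math/0603562 — 3 statements merged into one kernel-verified Lean document; each statement's English description precedes it below -/
import Mathlib

section
/- If A is a commutative Poisson algebra and I is a Poisson ideal of A (i.e. {A,I} ⊆ I), then the radical √I is also a Poisson ideal of A. -/
/-- If `A` is a commutative Poisson algebra (over ℂ) and `I` is a Poisson ideal of `A`
(i.e. `{A, I} ⊆ I`), then the radical `√I` is also a Poisson ideal of `A`. -/
theorem radical_of_poisson_ideal_is_poisson
    {A : Type*} [CommRing A] [Algebra ℂ A]
    (br : A → A → A)
    (hadd_left : ∀ a b c : A, br (a + b) c = br a c + br b c)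
    (hadd_right : ∀ a b c : A, br a (b + c) = br a b + br a c)
    (hsmul_left : ∀ (s : ℂ) (a b : A), br (s • a) b = s • br a b)
    (hsmul_right : ∀ (s : ℂ) (a b : A), br a (s • b) = s • br a b)
    (halt : ∀ a : A, br a a = 0)
    (hjacobi : ∀ a b c : A, br a (br b c) + br b (br c a) + br c (br a b) = 0)
    (hleibniz : ∀ a b c : A, br a (b * c) = br a b * c + b * br a c)
    (I : Ideal A)
    (hI : ∀ a : A, ∀ x ∈ I, br a x ∈ I) :
    ∀ a : A, ∀ x ∈ I.radical, br a x ∈ I.radical := by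
  intro a x hx
  obtain ⟨n, hn⟩ := hx
  -- power rule
  have hpow : ∀ (y : A) (k : ℕ), br a (y ^ (k + 1)) = ((k : A) + 1) * y ^ k * br a y := by
    intro y k
    induction k with
    | zero => simp
    | succ k ih =>
      have : y ^ (k + 2) = y * y ^ (k + 1) := by ring
      rw [this, hleibniz, ih]
      push_cast
      ring
  -- division by positive integers
  have hdiv : ∀ (m : ℕ) (y : A), ((m : A) + 1) * y ∈ I → y ∈ I := by
    intro m y h
    have key : (algebraMap ℂ A (((m : ℂ) + 1)⁻¹)) * (((m : A) + 1) * y) = y := by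
      rw [← mul_assoc]
      have h1 : ((m : A) + 1) = algebraMap ℂ A ((m : ℂ) + 1) := by
        simp [map_add, map_natCast]
      rw [h1, ← map_mul, inv_mul_cancel₀ (Nat.cast_add_one_ne_zero m), map_one, one_mul]
    have := Ideal.mul_mem_left I (algebraMap ℂ A (((m : ℂ) + 1)⁻¹)) h
    rwa [key] at this
  set u := br a x with hu
  rcases Nat.eq_zero_or_pos n with hn0 | hn1
  · subst hn0
    simp only [pow_zero] at hn
    exact ⟨0, by simpa using hn⟩
  -- main claim
  have claim : ∀ (j e : ℕ), e + j + 1 = n → x ^ e * u ^ (2 * j + 1) ∈ I := by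
    intro j
    induction j with
    | zero =>
      intro e he
      have h1 : br a (x ^ n) ∈ I := hI a _ hn
      rw [← he, hpow] at h1
      apply hdiv e
      have : ((e : A) + 1) * (x ^ e * u ^ (2 * 0 + 1)) = ((e : A) + 1) * x ^ e * br a x := by
        rw [hu]; ring
      rw [this]
      exact h1
    | succ j ih =>
      intro e he
      have hP : x ^ (e + 1) * u ^ (2 * j + 1) ∈ I := ih (e + 1) (by omega)
      have h1 : br a (x ^ (e + 1) * u ^ (2 * j + 1)) ∈ I := hI a _ hP
      rw [hleibniz, hpow] at h1
      have h2 : br a (u ^ (2 * j + 1)) = ((2 * j : A) + 1) * u ^ (2 * j) * br a u := by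
        have := hpow u (2 * j)
        push_cast at this ⊢
        exact this
      rw [h2] at h1
      -- multiply by u
      have h3 := Ideal.mul_mem_left I u h1
      have h4 : u * (((e : A) + 1) * x ^ e * br a x * u ^ (2 * j + 1) +
          x ^ (e + 1) * (((2 * j : A) + 1) * u ^ (2 * j) * br a u)) =
          ((e : A) + 1) * (x ^ e * u ^ (2 * (j + 1) + 1)) +
          ((2 * j : A) + 1) * br a u * (x ^ (e + 1) * u ^ (2 * j + 1)) := by
        rw [hu]; ring
      rw [h4] at h3
      have h5 : ((2 * j : A) + 1) * br a u * (x ^ (e + 1) * u ^ (2 * j + 1)) ∈ I :=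
        Ideal.mul_mem_left I _ hP
      have h6 : ((e : A) + 1) * (x ^ e * u ^ (2 * (j + 1) + 1)) ∈ I := by
        have := I.sub_mem h3 h5
        simpa using this
      exact hdiv e _ h6
  refine ⟨2 * (n - 1) + 1, ?_⟩
  have := claim (n - 1) 0 (by omega)
  simpa using this
end

section
/- Let δ be an isotropic vector for the symmetric bilinear form of a quiver Q ((δ,δ) = 0 and (δ, ε_k) = 0 for all k), extended to Q' by a framing vertex ∞ attached by one arrow to a vertex 0 with δ_0 = 1. If ε_∞ + nδ = β⁽¹⁾ + ⋯ + β⁽ʳ⁾ with each β⁽ᵗ⁾ a positive root of Q', then Σ_t p'(β⁽ᵗ⁾) ≤ n = p'(ε_∞ + nδ), with equality exactly when all but one of the β⁽ᵗ⁾ equal δ. -/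
/-- The symmetrized Ringel form `(α,β) = ⟨α,β⟩ + ⟨β,α⟩` of a quiver with head and tail
maps `hd, tl : A → I`. -/
def ringelSym {I A : Type} [Fintype I] [Fintype A] (hd tl : A → I)
    (x y : I → ℤ) : ℤ :=
  2 * ∑ i : I, x i * y i - ∑ a : A, (x (tl a) * y (hd a) + x (hd a) * y (tl a))

/-- `p(α) = 1 − (1/2)(α,α)`. -/
def pQ {I A : Type} [Fintype I] [Fintype A] (hd tl : A → I) (x : I → ℤ) : ℚ :=
  1 - (ringelSym hd tl x x : ℚ) / 2

/-- The coordinate vector `ε_i`. -/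
def coordVec {I : Type} [DecidableEq I] (i : I) : I → ℤ :=
  fun j => if j = i then 1 else 0

/-- The vertex `i` is loopfree. -/
def loopfreeV {I A : Type} (hd tl : A → I) (i : I) : Prop :=
  ∀ a : A, ¬(hd a = i ∧ tl a = i)

/-- The reflection `s_i(α) = α − (α, ε_i) ε_i` at a vertex `i`. -/
def reflectQ {I A : Type} [Fintype I] [Fintype A] [DecidableEq I]
    (hd tl : A → I) (i : I) (x : I → ℤ) : I → ℤ :=
  x - ringelSym hd tl x (coordVec i) • coordVec i

/-- The support of `x` is connected in the quiver. -/
def suppConnected {I A : Type} (hd tl : A → I) (x : I → ℤ) : Prop :=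
  ∀ j k : I, x j ≠ 0 → x k ≠ 0 →
    Relation.ReflTransGen
      (fun u v => x u ≠ 0 ∧ x v ≠ 0 ∧
        ∃ a : A, (hd a = u ∧ tl a = v) ∨ (hd a = v ∧ tl a = u)) j k

/-- `x` lies in the fundamental region: nonzero, nonnegative, connected support, and
`(x, ε_i) ≤ 0` for every vertex `i`. -/
def inFundamental {I A : Type} [Fintype I] [Fintype A] [DecidableEq I]
    (hd tl : A → I) (x : I → ℤ) : Prop :=
  x ≠ 0 ∧ (∀ i, 0 ≤ x i) ∧ suppConnected hd tl x ∧
    ∀ i : I, ringelSym hd tl x (coordVec i) ≤ 0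

/-- Real roots: obtained from coordinate vectors at loopfree vertices by sequences of
reflections at loopfree vertices. -/
inductive IsRealRoot {I A : Type} [Fintype I] [Fintype A] [DecidableEq I]
    (hd tl : A → I) : (I → ℤ) → Prop
  | coord (i : I) : loopfreeV hd tl i → IsRealRoot hd tl (coordVec i)
  | refl (i : I) (x : I → ℤ) : loopfreeV hd tl i → IsRealRoot hd tl x →
      IsRealRoot hd tl (reflectQ hd tl i x)

/-- Imaginary roots: obtained from `±(fundamental region)` by sequences of reflections at
loopfree vertices. -/
inductive IsImagRoot {I A : Type} [Fintype I] [Fintype A] [DecidableEq I]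
    (hd tl : A → I) : (I → ℤ) → Prop
  | fund (x : I → ℤ) : inFundamental hd tl x ∨ inFundamental hd tl (-x) →
      IsImagRoot hd tl x
  | refl (i : I) (x : I → ℤ) : loopfreeV hd tl i → IsImagRoot hd tl x →
      IsImagRoot hd tl (reflectQ hd tl i x)

/-- Roots of the quiver. -/
def IsRoot {I A : Type} [Fintype I] [Fintype A] [DecidableEq I]
    (hd tl : A → I) (x : I → ℤ) : Prop :=
  IsRealRoot hd tl x ∨ IsImagRoot hd tl x

/-- Positive roots. -/
def IsPosRoot {I A : Type} [Fintype I] [Fintype A] [DecidableEq I]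
    (hd tl : A → I) (x : I → ℤ) : Prop :=
  IsRoot hd tl x ∧ (∀ i, 0 ≤ x i) ∧ x ≠ 0

/-! With `δ` positive and isotropic, the Tits form `q` of `Q` is a sum of squares,
`2 q(x) = Σ_a δ_{ha} δ_{ta} (x_{ha}/δ_{ha} - x_{ta}/δ_{ta})²`, hence positive semidefinite
with radical `ℤ δ` since `Q` is connected. A summand `x` of `ε_∞ + nδ` has `x_∞ ∈ {0, 1}` and
`p'(x) = 1 - x_∞² - q(x|_Q) + x_0 x_∞ ≤ x_0`, so `Σ_t p'(β⁽ᵗ⁾) ≤ Σ_t β⁽ᵗ⁾_0 = n`.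
In the equality case every `x|_Q` dominates `x_0 δ`; as these restrictions add up to exactly
`n δ`, they are all equal to it, and a summand with `x_∞ = 0` then has `p'(x) = 1 = x_0`,
i.e. `x = δ`. -/

open Finset

section TitsForm

variable {I A : Type} (hd tl : A → I)

abbrev ArrowAdj (u v : I) : Prop := ∃ a, (hd a = u ∧ tl a = v) ∨ (hd a = v ∧ tl a = u)

lemma eq_smul_of_forall_arrow {δ : I → ℤ} (hδ : ∀ i, δ i ≠ 0) {i0 : I}
    (hconn : ∀ k, Relation.ReflTransGen (ArrowAdj hd tl) i0 k)
    (hδ0 : δ i0 = 1) {x : I → ℤ} (hx : ∀ a, x (hd a) * δ (tl a) = x (tl a) * δ (hd a)) :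
    x = x i0 • δ := by
  funext k
  show x k = x i0 * δ k
  induction hconn k with
  | refl => rw [hδ0, mul_one]
  | tail _ hbc ih =>
    obtain ⟨a, ⟨rfl, rfl⟩ | ⟨rfl, rfl⟩⟩ := hbc
    · exact mul_right_cancel₀ (hδ (hd a)) (by rw [← hx a, ih]; ring)
    · exact mul_right_cancel₀ (hδ (tl a)) (by rw [hx a, ih]; ring)

variable [Fintype I] [Fintype A]

def titsForm (x : I → ℤ) : ℤ :=
  ∑ i, x i ^ 2 - ∑ a, x (hd a) * x (tl a)

lemma pQ_eq_one_sub_titsForm (x : I → ℤ) :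
    pQ hd tl x = ((1 - titsForm hd tl x : ℤ) : ℚ) := by
  have hself : ringelSym hd tl x x = 2 * titsForm hd tl x := by
    simp only [ringelSym, titsForm, mul_sub, mul_sum]
    congr 1 <;> exact sum_congr rfl fun _ _ => by ring
  rw [pQ, hself]
  push_cast
  ring

variable [DecidableEq I] {δ : I → ℤ}

lemma sum_arrows_mul_of_isotropic (hiso : ∀ k, ringelSym hd tl δ (coordVec k) = 0)
    (f : I → ℚ) :
    ∑ a, (f (hd a) * δ (tl a) + f (tl a) * δ (hd a)) = 2 * ∑ i, f i * δ i := by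
  have hk : ∀ k, ∑ a, ((if hd a = k then (δ (tl a) : ℚ) else 0) +
      (if tl a = k then (δ (hd a) : ℚ) else 0)) = 2 * δ k := by
    intro k
    have h := hiso k
    simp only [ringelSym, coordVec, mul_ite, mul_one, mul_zero, sum_ite_eq', mem_univ,
      if_true] at h
    exact_mod_cast (by linarith : ∑ a, ((if hd a = k then δ (tl a) else 0) +
      (if tl a = k then δ (hd a) else 0)) = 2 * δ k)
  calc ∑ a, (f (hd a) * δ (tl a) + f (tl a) * δ (hd a))
      = ∑ a, ∑ k, f k * ((if hd a = k then (δ (tl a) : ℚ) else 0) +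
          (if tl a = k then (δ (hd a) : ℚ) else 0)) := by
        simp [mul_add, mul_ite, sum_add_distrib]
    _ = 2 * ∑ i, f i * δ i := by
        rw [sum_comm, mul_sum]
        simp only [← mul_sum, hk]
        rw [mul_sum]
        exact sum_congr rfl fun i _ => by ring

lemma two_mul_titsForm_eq_sum_sq (hδ : ∀ i, δ i ≠ 0)
    (hiso : ∀ k, ringelSym hd tl δ (coordVec k) = 0) (x : I → ℤ) :
    2 * (titsForm hd tl x : ℚ) = ∑ a, (δ (hd a) * δ (tl a) : ℚ) *
      ((x (hd a) / δ (hd a) : ℚ) - x (tl a) / δ (tl a)) ^ 2 := by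
  have hδ' : ∀ i, (δ i : ℚ) ≠ 0 := fun i => by exact_mod_cast hδ i
  have hsq := sum_arrows_mul_of_isotropic hd tl hiso fun i => (x i : ℚ) ^ 2 / δ i
  simp only [div_mul_cancel₀ _ (hδ' _)] at hsq
  calc 2 * (titsForm hd tl x : ℚ)
      = ∑ a, (((x (hd a) : ℚ) ^ 2 / δ (hd a)) * δ (tl a) +
          ((x (tl a) : ℚ) ^ 2 / δ (tl a)) * δ (hd a)) - 2 * ∑ a, (x (hd a) * x (tl a) : ℚ) := by
        rw [hsq, titsForm]; push_cast; ring
    _ = _ := by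
        rw [mul_sum, ← sum_sub_distrib]
        refine sum_congr rfl fun a _ => ?_
        field_simp [hδ' (hd a), hδ' (tl a)]
        ring

lemma titsForm_nonneg (hδ : ∀ i, 0 < δ i) (hiso : ∀ k, ringelSym hd tl δ (coordVec k) = 0)
    (x : I → ℤ) : 0 ≤ titsForm hd tl x := by
  have hδ' : ∀ i, (0 : ℚ) < δ i := fun i => by exact_mod_cast hδ i
  have h := two_mul_titsForm_eq_sum_sq hd tl (fun i => (hδ i).ne') hiso x
  have : (0 : ℚ) ≤ 2 * titsForm hd tl x :=
    h ▸ sum_nonneg fun a _ => mul_nonneg (mul_pos (hδ' _) (hδ' _)).le (sq_nonneg _)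
  exact_mod_cast (by linarith : (0 : ℚ) ≤ titsForm hd tl x)

lemma titsForm_eq_zero_iff_forall_arrow (hδ : ∀ i, 0 < δ i)
    (hiso : ∀ k, ringelSym hd tl δ (coordVec k) = 0) (x : I → ℤ) :
    titsForm hd tl x = 0 ↔ ∀ a, x (hd a) * δ (tl a) = x (tl a) * δ (hd a) := by
  have hδ' : ∀ i, (0 : ℚ) < δ i := fun i => by exact_mod_cast hδ i
  have hq : titsForm hd tl x = 0 ↔ 2 * (titsForm hd tl x : ℚ) = 0 := by
    constructor <;> intro h
    · simp [h]
    · exact_mod_cast (by linarith : (titsForm hd tl x : ℚ) = 0)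
  rw [hq, two_mul_titsForm_eq_sum_sq hd tl (fun i => (hδ i).ne') hiso,
    sum_eq_zero_iff_of_nonneg fun a _ => mul_nonneg (mul_pos (hδ' _) (hδ' _)).le (sq_nonneg _)]
  refine forall_congr' fun a => ?_
  rw [mul_eq_zero, or_iff_right (mul_pos (hδ' _) (hδ' _)).ne', pow_eq_zero_iff two_ne_zero,
    sub_eq_zero, div_eq_div_iff (hδ' _).ne' (hδ' _).ne']
  simp only [mem_univ, true_implies]
  norm_cast

lemma titsForm_eq_zero_iff (hδ : ∀ i, 0 < δ i) (hiso : ∀ k, ringelSym hd tl δ (coordVec k) = 0)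
    {i0 : I} (hconn : ∀ k, Relation.ReflTransGen (ArrowAdj hd tl) i0 k)
    (hδ0 : δ i0 = 1) (x : I → ℤ) :
    titsForm hd tl x = 0 ↔ x = x i0 • δ := by
  rw [titsForm_eq_zero_iff_forall_arrow hd tl hδ hiso]
  refine ⟨eq_smul_of_forall_arrow hd tl (fun i => (hδ i).ne') hconn hδ0, fun hx a => ?_⟩
  rw [hx]
  simp only [Pi.smul_apply, smul_eq_mul]
  ring

lemma one_sub_titsForm_le (hδ : ∀ i, 0 < δ i) (hiso : ∀ k, ringelSym hd tl δ (coordVec k) = 0)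
    {i0 : I} (hconn : ∀ k, Relation.ReflTransGen (ArrowAdj hd tl) i0 k)
    (hδ0 : δ i0 = 1) {y : I → ℤ} (hy : 0 ≤ y) (hy0 : y ≠ 0) :
    1 - titsForm hd tl y ≤ y i0 := by
  have hi0 := hy i0
  rcases (titsForm_nonneg hd tl hδ hiso y).lt_or_eq with hq | hq
  · simp only [Pi.zero_apply] at hi0
    omega
  · have hyδ := (titsForm_eq_zero_iff hd tl hδ hiso hconn hδ0 y).1 hq.symm
    have : y i0 ≠ 0 := fun h0 => hy0 (by rw [hyδ, h0, zero_smul])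
    simp only [Pi.zero_apply] at hi0
    omega

end TitsForm

lemma exists_eq_one_of_sum_eq_one {ι : Type*} [Fintype ι] {f : ι → ℤ} (hf : ∀ t, 0 ≤ f t)
    (h : ∑ t, f t = 1) : ∃ t, f t = 1 ∧ ∀ s ≠ t, f s = 0 := by
  classical
  obtain ⟨t, ht⟩ : ∃ t, f t ≠ 0 := by
    by_contra! h0
    simp [h0] at h
  have hle : f t ≤ 1 := h ▸ single_le_sum (fun s _ => hf s) (mem_univ t)
  have ht1 : f t = 1 := by have := hf t; omega
  refine ⟨t, ht1, fun s hs => ?_⟩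
  have hrest : ∑ s ∈ univ.erase t, f s = 0 := by
    rw [← add_sum_erase _ _ (mem_univ t), ht1] at h
    omega
  exact (sum_eq_zero_iff_of_nonneg fun s _ => hf s).1 hrest s (mem_erase.2 ⟨hs, mem_univ s⟩)

section Framed

variable {I A : Type} (hd tl : A → I) (i0 : I)

abbrev framedHd : A ⊕ Unit → Option I := Sum.elim (fun a => some (hd a)) fun _ => some i0

abbrev framedTl : A ⊕ Unit → Option I := Sum.elim (fun a => some (tl a)) fun _ => none

variable [Fintype I] [Fintype A]

lemma pQ_framed (x : Option I → ℤ) :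
    pQ (framedHd hd i0) (framedTl tl) x =
      ((1 - x none ^ 2 - titsForm hd tl (x ∘ some) + x (some i0) * x none : ℤ) : ℚ) := by
  rw [pQ_eq_one_sub_titsForm]
  simp only [titsForm, Fintype.sum_option, Fintype.sum_sum_type, Sum.elim_inl, Sum.elim_inr,
    univ_unique, sum_singleton, Function.comp_apply]
  push_cast
  ring

variable [DecidableEq I] {δ : I → ℤ}

lemma pQ_framed_of_eq_smul {x : Option I → ℤ} {c : ℤ} (hδ : ∀ i, 0 < δ i)
    (hiso : ∀ k, ringelSym hd tl δ (coordVec k) = 0) (hx : x ∘ some = c • δ) :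
    pQ (framedHd hd i0) (framedTl tl) x = ((1 - x none ^ 2 + x (some i0) * x none : ℤ) : ℚ) := by
  have hq : titsForm hd tl (x ∘ some) = 0 := by
    rw [titsForm_eq_zero_iff_forall_arrow hd tl hδ hiso, hx]
    intro a
    simp only [Pi.smul_apply, smul_eq_mul]
    ring
  rw [pQ_framed, hq, sub_zero]

variable {i0} {ι : Type*} [Fintype ι] {β : ι → Option I → ℤ} {n : ℕ}

lemma pQ_framed_le (hδ : ∀ i, 0 < δ i) (hiso : ∀ k, ringelSym hd tl δ (coordVec k) = 0)
    (hconn : ∀ k, Relation.ReflTransGen (ArrowAdj hd tl) i0 k)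
    (hδ0 : δ i0 = 1) {x : Option I → ℤ} (hx : 0 ≤ x) (hx0 : x ≠ 0)
    (hnone : x none = 0 ∨ x none = 1) :
    pQ (framedHd hd i0) (framedTl tl) x ≤ x (some i0) := by
  rw [pQ_framed]
  suffices 1 - x none ^ 2 - titsForm hd tl (x ∘ some) + x (some i0) * x none ≤ x (some i0) by
    exact_mod_cast this
  have hq := titsForm_nonneg hd tl hδ hiso (x ∘ some)
  rcases hnone with h | h
  · have hy0 : x ∘ some ≠ 0 := fun hy =>
      hx0 (funext fun v => v.casesOn h fun i => congrFun hy i)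
    have := one_sub_titsForm_le hd tl hδ hiso hconn hδ0 (y := x ∘ some) (fun i => hx (some i)) hy0
    rw [h]
    simp only [Function.comp_apply] at this
    linarith
  · rw [h]
    linarith

lemma smul_le_of_pQ_framed_eq (hδ : ∀ i, 0 < δ i)
    (hiso : ∀ k, ringelSym hd tl δ (coordVec k) = 0)
    (hconn : ∀ k, Relation.ReflTransGen (ArrowAdj hd tl) i0 k)
    (hδ0 : δ i0 = 1) {x : Option I → ℤ} (hx : 0 ≤ x) (hnone : x none = 0 ∨ x none = 1)
    (heq : pQ (framedHd hd i0) (framedTl tl) x = x (some i0)) :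
    x (some i0) • δ ≤ x ∘ some := by
  rw [pQ_framed] at heq
  have heq' : 1 - x none ^ 2 - titsForm hd tl (x ∘ some) + x (some i0) * x none =
      x (some i0) := by
    exact_mod_cast heq
  have hq := titsForm_nonneg hd tl hδ hiso (x ∘ some)
  have hi0 : 0 ≤ x (some i0) := hx (some i0)
  have hradical := titsForm_eq_zero_iff hd tl hδ hiso hconn hδ0 (x ∘ some)
  simp only [Function.comp_apply] at hradical
  -- either `x ∘ some` lies in the radical, or `x (some i0) = 0` and the claim is `0 ≤ x ∘ some`
  by_cases h0 : titsForm hd tl (x ∘ some) = 0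
  · exact (hradical.1 h0).ge
  · have : x (some i0) = 0 := by rcases hnone with h | h <;> rw [h] at heq' <;> omega
    rw [this, zero_smul]
    exact fun i => hx (some i)

lemma eq_extend_of_forall_pQ_framed_eq (hδ : ∀ i, 0 < δ i)
    (hiso : ∀ k, ringelSym hd tl δ (coordVec k) = 0)
    (hconn : ∀ k, Relation.ReflTransGen (ArrowAdj hd tl) i0 k)
    (hδ0 : δ i0 = 1) (hβ : ∀ t, 0 ≤ β t) (hnone : ∀ t, β t none = 0 ∨ β t none = 1)
    (hsome : ∑ t, β t ∘ some = n • δ)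
    (heq : ∀ t, pQ (framedHd hd i0) (framedTl tl) (β t) = β t (some i0))
    {s : ι} (hs : β s none = 0) : β s = fun v => v.elim 0 δ := by
  have hle : ∀ t, β t (some i0) • δ ≤ β t ∘ some := fun t =>
    smul_le_of_pQ_framed_eq hd tl hδ hiso hconn hδ0 (hβ t) (hnone t) (heq t)
  have hsum : ∑ t, β t (some i0) • δ = ∑ t, β t ∘ some := by
    have h := congrFun hsome i0
    simp only [Finset.sum_apply, Function.comp_apply, Pi.smul_apply, hδ0, nsmul_eq_mul,
      mul_one] at h
    rw [← sum_smul, h, hsome, natCast_zsmul]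
  have hradial : β s ∘ some = β s (some i0) • δ :=
    ((sum_eq_sum_iff_of_le fun t _ => hle t).1 hsum s (mem_univ s)).symm
  have hc : β s (some i0) = 1 := by
    have h := heq s
    rw [pQ_framed_of_eq_smul hd tl i0 hδ hiso hradial, hs] at h
    norm_num at h
    exact_mod_cast h.symm
  funext v
  cases v with
  | none => exact hs
  | some i => simpa [hc] using congrFun hradial i

lemma pQ_framed_eq_of_eq_extend (hδ : ∀ i, 0 < δ i)
    (hiso : ∀ k, ringelSym hd tl δ (coordVec k) = 0) (hδ0 : δ i0 = 1)
    (hnone : ∑ t, β t none = 1) (hsome : ∑ t, β t ∘ some = n • δ) {t0 : ι}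
    (hext : ∀ s ≠ t0, β s = fun v => v.elim 0 δ) (t : ι) :
    pQ (framedHd hd i0) (framedTl tl) (β t) = β t (some i0) := by
  classical
  by_cases ht : t = t0
  · subst ht
    have hrest : ∀ s ∈ univ.erase t, β s = fun v => v.elim 0 δ := fun s hs =>
      hext s (mem_erase.1 hs).1
    rw [← add_sum_erase _ _ (mem_univ t), sum_congr rfl fun s hs => congrFun (hrest s hs) none]
      at hnone
    rw [← add_sum_erase _ _ (mem_univ t), sum_congr rfl fun s hs => by rw [hrest s hs]]
      at hsome
    simp only [Option.elim_none, sum_const_zero, add_zero] at hnone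
    have hrad : β t ∘ some = ((n : ℤ) - #(univ.erase t)) • δ := by
      have hδext : (fun v : Option I => v.elim 0 δ) ∘ some = δ := rfl
      rw [sub_smul, natCast_zsmul, natCast_zsmul, ← hsome, hδext, sum_const]
      abel
    rw [pQ_framed_of_eq_smul hd tl i0 hδ hiso hrad, hnone]
    push_cast
    ring
  · have hrad : β t ∘ some = (1 : ℤ) • δ := by rw [hext t ht, one_smul]; rfl
    rw [pQ_framed_of_eq_smul hd tl i0 hδ hiso hrad, hext t ht]
    simp [hδ0]

end Framed

theorem sum_p_le_n_of_root_decomposition_general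
    {I A : Type} [Fintype I] [Fintype A] [DecidableEq I]
    (hd tl : A → I)
    (hconn : ∀ j k : I, Relation.ReflTransGen
      (fun u v => ∃ a : A, (hd a = u ∧ tl a = v) ∨ (hd a = v ∧ tl a = u)) j k)
    (δ : I → ℤ) (hδpos : ∀ i, 1 ≤ δ i)
    (hiso : ∀ k : I, ringelSym hd tl δ (coordVec k) = 0)
    (i0 : I) (hδ0 : δ i0 = 1)
    (n r : ℕ) (β : Fin r → (Option I → ℤ))
    (hroot : ∀ t : Fin r,
      IsPosRoot (Sum.elim (fun a => some (hd a)) (fun _ : Unit => some i0))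
        (Sum.elim (fun a => some (tl a)) (fun _ : Unit => (none : Option I))) (β t))
    (hsum : ∑ t : Fin r, β t =
      coordVec (none : Option I) + n • fun v => v.elim 0 δ) :
    (∑ t : Fin r,
        pQ (Sum.elim (fun a => some (hd a)) (fun _ : Unit => some i0))
          (Sum.elim (fun a => some (tl a)) (fun _ : Unit => (none : Option I))) (β t))
      ≤ n ∧
    ((∑ t : Fin r,
        pQ (Sum.elim (fun a => some (hd a)) (fun _ : Unit => some i0))
          (Sum.elim (fun a => some (tl a)) (fun _ : Unit => (none : Option I))) (β t))
      = n ↔ ∃ t0 : Fin r, ∀ s : Fin r, s ≠ t0 → β s = fun v => v.elim 0 δ) := by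
  have hδ : ∀ i, 0 < δ i := hδpos
  have hβ : ∀ t, 0 ≤ β t := fun t => (hroot t).2.1
  have hnone : ∑ t, β t none = 1 := by
    simpa [coordVec, Finset.sum_apply] using congrFun hsum none
  have hsome : ∑ t, β t ∘ some = n • δ := by
    funext i
    simpa [coordVec, Finset.sum_apply] using congrFun hsum (some i)
  obtain ⟨t1, ht1, hrest⟩ := exists_eq_one_of_sum_eq_one (fun t => hβ t none) hnone
  have hnone01 : ∀ t, β t none = 0 ∨ β t none = 1 := fun t =>
    (eq_or_ne t t1).elim (fun h => .inr (h ▸ ht1)) fun h => .inl (hrest t h)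
  have hle : ∀ t, pQ (framedHd hd i0) (framedTl tl) (β t) ≤ β t (some i0) := fun t =>
    pQ_framed_le hd tl hδ hiso (hconn i0) hδ0 (hβ t) (hroot t).2.2 (hnone01 t)
  have hn : ∑ t, (β t (some i0) : ℚ) = n := by
    have h := congrFun hsome i0
    simp only [Finset.sum_apply, Function.comp_apply, Pi.smul_apply, hδ0, nsmul_eq_mul,
      mul_one] at h
    exact_mod_cast h
  refine ⟨hn ▸ sum_le_sum fun t _ => hle t, ?_⟩
  rw [← hn, sum_eq_sum_iff_of_le fun t _ => hle t]
  refine ⟨fun heq => ⟨t1, fun s hs => eq_extend_of_forall_pQ_framed_eq hd tl hδ hiso (hconn i0)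
    hδ0 hβ hnone01 hsome (fun t => heq t (mem_univ t)) (hrest s hs)⟩, ?_⟩
  rintro ⟨t0, hext⟩ t -
  exact pQ_framed_eq_of_eq_extend hd tl hδ hiso hδ0 hnone hsome hext t

/-- Let `Q` be a connected loopfree extended Dynkin quiver with minimal positive
imaginary root `δ` (`δ` is positive, isotropic — `(δ, ε_k) = 0` for all `k` — and minimal
among positive radical vectors), and let `Q'` be obtained by adjoining a framing vertex
`∞` with a single arrow from `∞` to an extending vertex `0` (so `δ_0 = 1`).  If
`ε_∞ + nδ = β⁽¹⁾ + ⋯ + β⁽ʳ⁾` with each `β⁽ᵗ⁾` a positive root of `Q'`, then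
`Σ_t p'(β⁽ᵗ⁾) ≤ n = p'(ε_∞ + nδ)`, with equality exactly when all but one of the
`β⁽ᵗ⁾` equal `δ`. -/
theorem sum_p_le_n_of_root_decomposition
    {I A : Type} [Fintype I] [Fintype A] [DecidableEq I]
    (hd tl : A → I)
    (hloopfree : ∀ a : A, hd a ≠ tl a)
    (hconn : ∀ j k : I, Relation.ReflTransGen
      (fun u v => ∃ a : A, (hd a = u ∧ tl a = v) ∨ (hd a = v ∧ tl a = u)) j k)
    (δ : I → ℤ) (hδpos : ∀ i, 1 ≤ δ i)
    (hiso : ∀ k : I, ringelSym hd tl δ (coordVec k) = 0)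
    (hmin : ∀ x : I → ℤ, (∀ i, 0 ≤ x i) → x ≠ 0 →
      (∀ k : I, ringelSym hd tl x (coordVec k) = 0) → ∀ i, δ i ≤ x i)
    (i0 : I) (hδ0 : δ i0 = 1)
    (n r : ℕ) (β : Fin r → (Option I → ℤ))
    (hroot : ∀ t : Fin r,
      IsPosRoot (Sum.elim (fun a => some (hd a)) (fun _ : Unit => some i0))
        (Sum.elim (fun a => some (tl a)) (fun _ : Unit => (none : Option I))) (β t))
    (hsum : ∑ t : Fin r, β t =
      coordVec (none : Option I) + n • fun v => v.elim 0 δ) :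
    (∑ t : Fin r,
        pQ (Sum.elim (fun a => some (hd a)) (fun _ : Unit => some i0))
          (Sum.elim (fun a => some (tl a)) (fun _ : Unit => (none : Option I))) (β t))
      ≤ n ∧
    ((∑ t : Fin r,
        pQ (Sum.elim (fun a => some (hd a)) (fun _ : Unit => some i0))
          (Sum.elim (fun a => some (tl a)) (fun _ : Unit => (none : Option I))) (β t))
      = n ↔ ∃ t0 : Fin r, ∀ s : Fin r, s ≠ t0 → β s = fun v => v.elim 0 δ) :=
  sum_p_le_n_of_root_decomposition_general hd tl hconn δ hδpos hiso i0 hδ0 n r β hroot hsum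
end

section
/- For the rational Cherednik algebra of type B_n at t = 0 with parameters (c₁, c_γ) ≠ (0,0), consider the quiver ∞ → 0 ⇄ 1 at parameter λ'(c) = (n c₁, −c₁ + c_γ, −c_γ); then the dimension vector (1,n,n) admits a decomposition into two or more positive roots β with λ'(c)·β = 0, other than the trivial decomposition, exactly when c₁ = 0 or c_γ = ±m c₁ for some integer m with 0 ≤ m ≤ n−1. -/
abbrev HD : Fin 3 → Fin 3 := ![1,2,2]
abbrev TL : Fin 3 → Fin 3 := ![0,1,1]

lemma B_eq (x y : Fin 3 → ℤ) :
    ringelSym HD TL x y =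
      2*(x 0*y 0 + x 1*y 1 + x 2*y 2) - (x 0*y 1 + x 1*y 0) - 2*(x 1*y 2 + x 2*y 1) := by
  simp [ringelSym, Fin.sum_univ_three, HD, TL]
  ring

lemma coordVec_eq0 : (coordVec 0 : Fin 3 → ℤ) = ![1,0,0] := by
  funext j; fin_cases j <;> simp [coordVec]

lemma coordVec_eq1 : (coordVec 1 : Fin 3 → ℤ) = ![0,1,0] := by
  funext j; fin_cases j <;> simp [coordVec]

lemma coordVec_eq2 : (coordVec 2 : Fin 3 → ℤ) = ![0,0,1] := by
  funext j; fin_cases j <;> simp [coordVec]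

lemma B_c0 (x : Fin 3 → ℤ) : ringelSym HD TL x (coordVec 0) = 2 * x 0 - x 1 := by
  rw [B_eq, coordVec_eq0]; simp

lemma B_c1 (x : Fin 3 → ℤ) : ringelSym HD TL x (coordVec 1) = 2 * x 1 - x 0 - 2 * x 2 := by
  rw [B_eq, coordVec_eq1]; simp

lemma B_c2 (x : Fin 3 → ℤ) : ringelSym HD TL x (coordVec 2) = 2 * x 2 - 2 * x 1 := by
  rw [B_eq, coordVec_eq2]; simp

lemma loopfree (i : Fin 3) : loopfreeV HD TL i := by
  intro a; fin_cases a <;> fin_cases i <;> simp [HD, TL]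

lemma reflect0 (x : Fin 3 → ℤ) : reflectQ HD TL 0 x = ![x 1 - x 0, x 1, x 2] := by
  funext j; rw [reflectQ]; fin_cases j <;>
    simp [B_c0, coordVec] <;> ring

lemma reflect1 (x : Fin 3 → ℤ) : reflectQ HD TL 1 x = ![x 0, x 0 + 2 * x 2 - x 1, x 2] := by
  funext j; rw [reflectQ]; fin_cases j <;>
    simp [B_c1, coordVec] <;> ring

lemma reflect2 (x : Fin 3 → ℤ) : reflectQ HD TL 2 x = ![x 0, x 1, 2 * x 1 - x 2] := by
  funext j; rw [reflectQ]; fin_cases j <;>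
    simp [B_c2, coordVec] <;> ring

lemma B_reflect (i : Fin 3) (x : Fin 3 → ℤ) :
    ringelSym HD TL (reflectQ HD TL i x) (reflectQ HD TL i x) = ringelSym HD TL x x := by
  fin_cases i
  · rw [show ((⟨0,by norm_num⟩ : Fin 3)) = (0 : Fin 3) from rfl, reflect0, B_eq, B_eq]
    simp; ring
  · rw [show ((⟨1,by norm_num⟩ : Fin 3)) = (1 : Fin 3) from rfl, reflect1, B_eq, B_eq]
    simp; ring
  · rw [show ((⟨2,by norm_num⟩ : Fin 3)) = (2 : Fin 3) from rfl, reflect2, B_eq, B_eq]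
    simp; ring

lemma vec_ne_zero {x : Fin 3 → ℤ} (h : x ≠ 0) : ¬ (x 0 = 0 ∧ x 1 = 0 ∧ x 2 = 0) := by
  rintro ⟨h0, h1, h2⟩
  exact h (by funext j; fin_cases j <;> assumption)

lemma vec_eq_zero {x : Fin 3 → ℤ} (h0 : x 0 = 0) (h1 : x 1 = 0) (h2 : x 2 = 0) : x = 0 := by
  funext j; fin_cases j <;> assumption

lemma reflect_ne_zero (i : Fin 3) (x : Fin 3 → ℤ) (h : x ≠ 0) : reflectQ HD TL i x ≠ 0 := by
  intro h0
  apply h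
  fin_cases i
  · rw [show ((⟨0,by norm_num⟩ : Fin 3)) = (0 : Fin 3) from rfl, reflect0] at h0
    have e0 := congrFun h0 0
    have e1 := congrFun h0 1
    have e2 := congrFun h0 2
    simp at e0 e1 e2
    exact vec_eq_zero (by omega) e1 e2
  · rw [show ((⟨1,by norm_num⟩ : Fin 3)) = (1 : Fin 3) from rfl, reflect1] at h0
    have e0 := congrFun h0 0
    have e1 := congrFun h0 1
    have e2 := congrFun h0 2
    simp at e0 e1 e2
    exact vec_eq_zero e0 (by omega) e2
  · rw [show ((⟨2,by norm_num⟩ : Fin 3)) = (2 : Fin 3) from rfl, reflect2] at h0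
    have e0 := congrFun h0 0
    have e1 := congrFun h0 1
    have e2 := congrFun h0 2
    simp at e0 e1 e2
    exact vec_eq_zero e0 e1 (by omega)

lemma B_self_expand (x : Fin 3 → ℤ) :
    ringelSym HD TL x x = x 0 * ringelSym HD TL x (coordVec 0)
      + x 1 * ringelSym HD TL x (coordVec 1) + x 2 * ringelSym HD TL x (coordVec 2) := by
  rw [B_eq, B_c0, B_c1, B_c2]; ring

lemma B_neg (x : Fin 3 → ℤ) : ringelSym HD TL (-x) (-x) = ringelSym HD TL x x := by
  rw [B_eq, B_eq]; simp

lemma fund_props {x : Fin 3 → ℤ} (h : inFundamental HD TL x ∨ inFundamental HD TL (-x)) :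
    x ≠ 0 ∧ ringelSym HD TL x x ≤ 0 := by
  rcases h with h | h
  · refine ⟨h.1, ?_⟩
    rw [B_self_expand]
    have := h.2.2.2
    have h0 := mul_nonpos_of_nonneg_of_nonpos (h.2.1 0) (this 0)
    have h1 := mul_nonpos_of_nonneg_of_nonpos (h.2.1 1) (this 1)
    have h2 := mul_nonpos_of_nonneg_of_nonpos (h.2.1 2) (this 2)
    linarith
  · refine ⟨fun hx => h.1 (by rw [hx]; simp), ?_⟩
    rw [← B_neg, B_self_expand]
    have := h.2.2.2
    have h0 := mul_nonpos_of_nonneg_of_nonpos (h.2.1 0) (this 0)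
    have h1 := mul_nonpos_of_nonneg_of_nonpos (h.2.1 1) (this 1)
    have h2 := mul_nonpos_of_nonneg_of_nonpos (h.2.1 2) (this 2)
    linarith

lemma coordVec_ne_zero (i : Fin 3) : (coordVec i : Fin 3 → ℤ) ≠ 0 := by
  intro h
  have := congrFun h i
  simp [coordVec] at this

lemma root_props {x : Fin 3 → ℤ} (h : IsRoot HD TL x) :
    x ≠ 0 ∧ (ringelSym HD TL x x = 2 ∨ ringelSym HD TL x x ≤ 0) := by
  rcases h with h | h
  · induction h with
    | coord i hi =>
        refine ⟨coordVec_ne_zero i, Or.inl ?_⟩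
        fin_cases i
        · rw [show ((⟨0,by norm_num⟩ : Fin 3)) = (0 : Fin 3) from rfl, B_eq, coordVec_eq0]; simp
        · rw [show ((⟨1,by norm_num⟩ : Fin 3)) = (1 : Fin 3) from rfl, B_eq, coordVec_eq1]; simp
        · rw [show ((⟨2,by norm_num⟩ : Fin 3)) = (2 : Fin 3) from rfl, B_eq, coordVec_eq2]; simp
    | refl i y hi hy ih =>
        exact ⟨reflect_ne_zero i y ih.1, by rw [B_reflect]; exact ih.2⟩
  · induction h with
    | fund y hy =>
        have := fund_props hy
        exact ⟨this.1, Or.inr this.2⟩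
    | refl i y hi hy ih =>
        exact ⟨reflect_ne_zero i y ih.1, by rw [B_reflect]; exact ih.2⟩

section Conn
variable (x : Fin 3 → ℤ)

private def QRel : Fin 3 → Fin 3 → Prop := fun u v => x u ≠ 0 ∧ x v ≠ 0 ∧
    ∃ a : Fin 3, (HD a = u ∧ TL a = v) ∨ (HD a = v ∧ TL a = u)

lemma qrel01 (h0 : x 0 ≠ 0) (h1 : x 1 ≠ 0) : QRel x 0 1 :=
  ⟨h0, h1, 0, Or.inr ⟨rfl, rfl⟩⟩
lemma qrel10 (h0 : x 0 ≠ 0) (h1 : x 1 ≠ 0) : QRel x 1 0 :=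
  ⟨h1, h0, 0, Or.inl ⟨rfl, rfl⟩⟩
lemma qrel12 (h1 : x 1 ≠ 0) (h2 : x 2 ≠ 0) : QRel x 1 2 :=
  ⟨h1, h2, 1, Or.inr ⟨rfl, rfl⟩⟩
lemma qrel21 (h1 : x 1 ≠ 0) (h2 : x 2 ≠ 0) : QRel x 2 1 :=
  ⟨h2, h1, 1, Or.inl ⟨rfl, rfl⟩⟩

lemma suppConn_full (h0 : x 0 ≠ 0) (h1 : x 1 ≠ 0) (h2 : x 2 ≠ 0) :
    suppConnected HD TL x := by
  intro j k hj hk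
  show Relation.ReflTransGen (QRel x) j k
  fin_cases j <;> fin_cases k
  · exact .refl
  · exact .single (qrel01 x h0 h1)
  · exact .tail (.single (qrel01 x h0 h1)) (qrel12 x h1 h2)
  · exact .single (qrel10 x h0 h1)
  · exact .refl
  · exact .single (qrel12 x h1 h2)
  · exact .tail (.single (qrel21 x h1 h2)) (qrel10 x h0 h1)
  · exact .single (qrel21 x h1 h2)
  · exact .refl

lemma suppConn_12 (h0 : x 0 = 0) (h1 : x 1 ≠ 0) (h2 : x 2 ≠ 0) :
    suppConnected HD TL x := by
  intro j k hj hk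
  show Relation.ReflTransGen (QRel x) j k
  fin_cases j <;> fin_cases k <;> first
    | exact absurd h0 hj
    | exact absurd h0 hk
    | exact .refl
    | exact .single (qrel12 x h1 h2)
    | exact .single (qrel21 x h1 h2)

end Conn

lemma fund_0pp (p : ℕ) (hp : 1 ≤ p) : inFundamental HD TL ![0,(p:ℤ),(p:ℤ)] := by
  have hp' : (0:ℤ) < (p:ℤ) := by exact_mod_cast hp
  refine ⟨?_, ?_, ?_, ?_⟩
  · intro h
    have := congrFun h 1
    simp at this
    omega
  · intro i; fin_cases i <;> simp <;> omega
  · exact suppConn_12 _ (by simp) (by simp; omega) (by simp; omega)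
  · intro i; fin_cases i
    · rw [show ((⟨0,by norm_num⟩ : Fin 3)) = (0 : Fin 3) from rfl, B_c0]; simp
    · rw [show ((⟨1,by norm_num⟩ : Fin 3)) = (1 : Fin 3) from rfl, B_c1]; simp
    · rw [show ((⟨2,by norm_num⟩ : Fin 3)) = (2 : Fin 3) from rfl, B_c2]; simp

lemma fund_1kk (k : ℕ) (hk : 2 ≤ k) : inFundamental HD TL ![1,(k:ℤ),(k:ℤ)] := by
  have hk' : (2:ℤ) ≤ (k:ℤ) := by exact_mod_cast hk
  refine ⟨?_, ?_, ?_, ?_⟩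
  · intro h
    have := congrFun h 0
    simp at this
  · intro i; fin_cases i <;> simp <;> omega
  · exact suppConn_full _ (by simp) (by simp; omega) (by simp; omega)
  · intro i; fin_cases i
    · rw [show ((⟨0,by norm_num⟩ : Fin 3)) = (0 : Fin 3) from rfl, B_c0]; simp; omega
    · rw [show ((⟨1,by norm_num⟩ : Fin 3)) = (1 : Fin 3) from rfl, B_c1]; simp
    · rw [show ((⟨2,by norm_num⟩ : Fin 3)) = (2 : Fin 3) from rfl, B_c2]; simp

lemma vec3_eq {a b c a' b' c' : ℤ} (h0 : a = a') (h1 : b = b') (h2 : c = c') :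
    (![a,b,c] : Fin 3 → ℤ) = ![a',b',c'] := by
  subst h0; subst h1; subst h2; rfl

lemma real_0_succ (m : ℕ) : IsRealRoot HD TL ![0,(m:ℤ),(m:ℤ)+1] ∧
    IsRealRoot HD TL ![0,(m:ℤ)+1,(m:ℤ)] := by
  induction m with
  | zero =>
      constructor
      · have e : (coordVec 2 : Fin 3 → ℤ) = ![0,((0:ℕ):ℤ),((0:ℕ):ℤ)+1] := by
          rw [coordVec_eq2]; exact vec3_eq rfl (by norm_num) (by norm_num)
        exact e ▸ IsRealRoot.coord 2 (loopfree 2)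
      · have e : (coordVec 1 : Fin 3 → ℤ) = ![0,((0:ℕ):ℤ)+1,((0:ℕ):ℤ)] := by
          rw [coordVec_eq1]; exact vec3_eq rfl (by norm_num) (by norm_num)
        exact e ▸ IsRealRoot.coord 1 (loopfree 1)
  | succ m ih =>
      constructor
      · have e : reflectQ HD TL 2 ![0,(m:ℤ)+1,(m:ℤ)] = ![0,((m+1:ℕ):ℤ),((m+1:ℕ):ℤ)+1] := by
          rw [reflect2]; exact vec3_eq (by simp) (by push_cast; simp) (by push_cast; ring)
        exact e ▸ IsRealRoot.refl 2 _ (loopfree 2) ih.2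
      · have e : reflectQ HD TL 1 ![0,(m:ℤ),(m:ℤ)+1] = ![0,((m+1:ℕ):ℤ)+1,((m+1:ℕ):ℤ)] := by
          rw [reflect1]; exact vec3_eq (by simp) (by push_cast; simp; ring) (by push_cast; simp)
        exact e ▸ IsRealRoot.refl 1 _ (loopfree 1) ih.1

lemma imag_1kk (k : ℕ) (hk : 1 ≤ k) : IsImagRoot HD TL ![1,(k:ℤ),(k:ℤ)] := by
  rcases Nat.lt_or_ge k 2 with h | h
  · have hk1 : k = 1 := by omega
    subst hk1
    have base : IsImagRoot HD TL ![0,(1:ℤ),(1:ℤ)] := by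
      apply IsImagRoot.fund
      exact Or.inl (by simpa using fund_0pp 1 le_rfl)
    have e : reflectQ HD TL 0 ![0,(1:ℤ),(1:ℤ)] = ![1,((1:ℕ):ℤ),((1:ℕ):ℤ)] := by
      rw [reflect0]; exact vec3_eq (by simp) (by simp) (by simp)
    exact e ▸ IsImagRoot.refl 0 _ (loopfree 0) base
  · exact IsImagRoot.fund _ (Or.inl (fund_1kk k h))

lemma root_1_kp1_k (k : ℕ) : IsRoot HD TL ![1,(k:ℤ)+1,(k:ℤ)] := by
  rcases Nat.eq_zero_or_pos k with h | h
  · subst h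
    refine Or.inl ?_
    have e : reflectQ HD TL 1 (coordVec 0) = ![1,((0:ℕ):ℤ)+1,((0:ℕ):ℤ)] := by
      rw [reflect1, coordVec_eq0]; exact vec3_eq (by simp) (by simp) (by simp)
    exact e ▸ IsRealRoot.refl 1 _ (loopfree 1) (IsRealRoot.coord 0 (loopfree 0))
  · refine Or.inr ?_
    have e : reflectQ HD TL 1 ![1,(k:ℤ),(k:ℤ)] = ![1,(k:ℤ)+1,(k:ℤ)] := by
      rw [reflect1]; exact vec3_eq (by simp) (by simp; ring) (by simp)
    exact e ▸ IsImagRoot.refl 1 _ (loopfree 1) (imag_1kk k h)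

lemma root_1_k_kp1 (k : ℕ) (hk : 1 ≤ k) : IsRoot HD TL ![1,(k:ℤ),(k:ℤ)+1] := by
  rcases Nat.lt_or_ge k 2 with h | h
  · have hk1 : k = 1 := by omega
    subst hk1
    refine Or.inl ?_
    have e1 : reflectQ HD TL 1 (coordVec 0) = ![1,(1:ℤ),(0:ℤ)] := by
      rw [reflect1, coordVec_eq0]; exact vec3_eq (by simp) (by simp) (by simp)
    have b1 : IsRealRoot HD TL ![1,(1:ℤ),(0:ℤ)] :=
      e1 ▸ IsRealRoot.refl 1 _ (loopfree 1) (IsRealRoot.coord 0 (loopfree 0))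
    have e2 : reflectQ HD TL 2 ![1,(1:ℤ),(0:ℤ)] = ![1,((1:ℕ):ℤ),((1:ℕ):ℤ)+1] := by
      rw [reflect2]; exact vec3_eq (by simp) (by simp) (by simp)
    exact e2 ▸ IsRealRoot.refl 2 _ (loopfree 2) b1
  · refine Or.inr ?_
    obtain ⟨j, rfl⟩ : ∃ j, k = j + 2 := ⟨k - 2, by omega⟩
    have base := imag_1kk (j+1) (by omega)
    have e1 : reflectQ HD TL 1 ![1,((j+1:ℕ):ℤ),((j+1:ℕ):ℤ)] = ![1,(j:ℤ)+2,(j:ℤ)+1] := by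
      rw [reflect1]; exact vec3_eq (by simp) (by push_cast; ring) (by push_cast; simp)
    have step1 : IsImagRoot HD TL ![1,(j:ℤ)+2,(j:ℤ)+1] :=
      e1 ▸ IsImagRoot.refl 1 _ (loopfree 1) base
    have e2 : reflectQ HD TL 2 ![1,(j:ℤ)+2,(j:ℤ)+1] = ![1,((j+2:ℕ):ℤ),((j+2:ℕ):ℤ)+1] := by
      rw [reflect2]; exact vec3_eq (by push_cast) (by push_cast; simp) (by push_cast; ring)
    exact e2 ▸ IsImagRoot.refl 2 _ (loopfree 2) step1

lemma isPosRoot_of {x : Fin 3 → ℤ} (h : IsRoot HD TL x) (hnn : ∀ i, 0 ≤ x i) :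
    IsPosRoot HD TL x := ⟨h, hnn, (root_props h).1⟩

def LHSstmt (n : ℕ) (c1 cγ : ℂ) : Prop :=
  ∃ (r : ℕ), 2 ≤ r ∧ ∃ β : Fin r → (Fin 3 → ℤ),
    (∀ t : Fin r,
      IsPosRoot HD TL (β t) ∧
      (n : ℂ) * c1 * (β t 0 : ℂ) + (-c1 + cγ) * (β t 1 : ℂ) +
        (-cγ) * (β t 2 : ℂ) = 0) ∧
    ∑ t : Fin r, β t = ![1, (n : ℤ), (n : ℤ)]

lemma decomp_two (n : ℕ) (c1 cγ : ℂ) (v w : Fin 3 → ℤ)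
    (hv : IsPosRoot HD TL v) (hw : IsPosRoot HD TL w)
    (ev : (n : ℂ) * c1 * (v 0 : ℂ) + (-c1 + cγ) * (v 1 : ℂ) + (-cγ) * (v 2 : ℂ) = 0)
    (ew : (n : ℂ) * c1 * (w 0 : ℂ) + (-c1 + cγ) * (w 1 : ℂ) + (-cγ) * (w 2 : ℂ) = 0)
    (hsum : v + w = ![1, (n : ℤ), (n : ℤ)]) : LHSstmt n c1 cγ := by
  refine ⟨2, le_rfl, ![v, w], fun t => ?_, ?_⟩
  · fin_cases t
    · refine ⟨by simpa using hv, ?_⟩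
      simp only [Matrix.cons_val_zero]
      exact ev
    · refine ⟨by simpa using hw, ?_⟩
      simp only [Matrix.cons_val_one, Matrix.head_cons]
      exact ew
  · rw [Fin.sum_univ_two]
    simpa using hsum

lemma constructA (n : ℕ) (hn : 2 ≤ n) (c1 cγ : ℂ) (h1 : c1 = 0) : LHSstmt n c1 cγ := by
  apply decomp_two n c1 cγ ![1,0,0] ![0,(n:ℤ),(n:ℤ)]
  · refine isPosRoot_of (Or.inl ?_) ?_
    · exact coordVec_eq0 ▸ IsRealRoot.coord 0 (loopfree 0)
    · intro i; fin_cases i <;> norm_num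
  · refine isPosRoot_of (Or.inr (IsImagRoot.fund _ (Or.inl (fund_0pp n (by omega))))) ?_
    intro i; fin_cases i <;> simp
  · subst h1; norm_num; exact Or.inr rfl
  · subst h1; norm_num; rw [show (![0, (n:ℤ), (n:ℤ)] : Fin 3 → ℤ) 2 = n from rfl]; push_cast; ring
  · funext j; fin_cases j <;> simp

lemma constructB (n : ℕ) (hn : 2 ≤ n) (c1 cγ : ℂ) (m : ℕ) (hm1 : 1 ≤ m) (hm : m ≤ n - 1)
    (h : cγ = (m : ℂ) * c1) : LHSstmt n c1 cγ := by
  obtain ⟨j, rfl⟩ : ∃ j, m = j + 1 := ⟨m - 1, by omega⟩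
  obtain ⟨k, hk, hnk⟩ : ∃ k, 1 ≤ k ∧ n = (j + 1) + k := ⟨n - (j+1), by omega, by omega⟩
  apply decomp_two n c1 cγ ![1,(k:ℤ),(k:ℤ)+1] ![0,(j:ℤ)+1,(j:ℤ)]
  · refine isPosRoot_of (root_1_k_kp1 k hk) ?_
    intro i; fin_cases i <;> simp <;> positivity
  · refine isPosRoot_of (Or.inl (real_0_succ j).2) ?_
    intro i; fin_cases i <;> simp <;> positivity
  · have hn' : (n : ℂ) = (j : ℂ) + 1 + (k : ℂ) := by exact_mod_cast congrArg (Nat.cast : ℕ → ℂ) hnk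
    subst h
    simp only [Matrix.cons_val_zero, Matrix.cons_val_one, Matrix.head_cons, Matrix.cons_val_two, Matrix.tail_cons]
    push_cast
    rw [hn']
    ring
  · subst h
    simp only [Matrix.cons_val_zero, Matrix.cons_val_one, Matrix.head_cons, Matrix.cons_val_two, Matrix.tail_cons]
    push_cast
    ring
  · funext i; fin_cases i <;> simp <;> push_cast <;> omega

lemma constructC (n : ℕ) (hn : 2 ≤ n) (c1 cγ : ℂ) (m : ℕ) (hm : m ≤ n - 1)
    (h : cγ = -((m : ℂ) * c1)) : LHSstmt n c1 cγ := by
  obtain ⟨k, hnk⟩ : ∃ k, n = m + k + 1 := ⟨n - m - 1, by omega⟩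
  apply decomp_two n c1 cγ ![1,(k:ℤ)+1,(k:ℤ)] ![0,(m:ℤ),(m:ℤ)+1]
  · refine isPosRoot_of (root_1_kp1_k k) ?_
    intro i; fin_cases i <;> simp <;> positivity
  · refine isPosRoot_of (Or.inl (real_0_succ m).1) ?_
    intro i; fin_cases i <;> simp <;> positivity
  · have hn' : (n : ℂ) = (m : ℂ) + (k : ℂ) + 1 := by exact_mod_cast congrArg (Nat.cast : ℕ → ℂ) hnk
    subst h
    simp only [Matrix.cons_val_zero, Matrix.cons_val_one, Matrix.head_cons, Matrix.cons_val_two, Matrix.tail_cons]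
    push_cast
    rw [hn']
    ring
  · subst h
    simp only [Matrix.cons_val_zero, Matrix.cons_val_one, Matrix.head_cons, Matrix.cons_val_two, Matrix.tail_cons]
    push_cast
    ring
  · funext i; fin_cases i <;> simp <;> push_cast <;> omega

lemma B_self_val (x : Fin 3 → ℤ) :
    ringelSym HD TL x x = 2*(x 0)^2 + 2*(x 1)^2 + 2*(x 2)^2 - 2*(x 0)*(x 1) - 4*(x 1)*(x 2) := by
  rw [B_eq]; ring

lemma forward_dir (n : ℕ) (hn : 2 ≤ n) (c1 cγ : ℂ) (h : LHSstmt n c1 cγ) :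
    c1 = 0 ∨ ∃ m : ℕ, m ≤ n - 1 ∧ (cγ = (m : ℂ) * c1 ∨ cγ = -((m : ℂ) * c1)) := by
  obtain ⟨r, hr, β, hall, hsum⟩ := h
  have hnn : ∀ t i, 0 ≤ β t i := fun t i => (hall t).1.2.1 i
  have hroot : ∀ t, β t ≠ 0 ∧
      (ringelSym HD TL (β t) (β t) = 2 ∨ ringelSym HD TL (β t) (β t) ≤ 0) :=
    fun t => root_props (hall t).1.1
  have hc0 : ∑ t, β t 0 = 1 := by simpa using congrFun hsum 0
  have hc1 : ∑ t, β t 1 = (n : ℤ) := by simpa using congrFun hsum 1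
  have hc2 : ∑ t, β t 2 = (n : ℤ) := by simpa using congrFun hsum 2
  -- find a piece with zero ∞-component
  obtain ⟨s, hs⟩ : ∃ s, β s 0 = 0 := by
    by_contra hall0
    push_neg at hall0
    have h1 : ∀ t ∈ Finset.univ, (1:ℤ) ≤ β t 0 := fun t _ => by
      have := hnn t 0; have := hall0 t; omega
    have h2 := Finset.card_nsmul_le_sum Finset.univ (fun t => β t 0) 1 h1
    rw [hc0] at h2
    simp [Finset.card_univ] at h2
    omega
  obtain ⟨p, hp⟩ : ∃ p, β s 1 = p := ⟨_, rfl⟩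
  obtain ⟨q, hq⟩ : ∃ q, β s 2 = q := ⟨_, rfl⟩
  have hp0 : 0 ≤ p := hp ▸ hnn s 1
  have hq0 : 0 ≤ q := hq ▸ hnn s 2
  -- classification of (0,p,q)
  have hBs : ringelSym HD TL (β s) (β s) = 2*(p - q)^2 := by
    rw [B_self_val, hs, hp, hq]; ring
  have hcases : p = q ∨ q = p + 1 ∨ p = q + 1 := by
    rcases (hroot s).2 with h2 | h2
    · rw [hBs] at h2
      have : (p - q - 1) * ((p - q) + 1) = 0 := by nlinarith
      rcases mul_eq_zero.mp this with h' | h' <;> omega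
    · rw [hBs] at h2
      left
      have h3 : (p - q)^2 ≤ 0 := by linarith
      have h4 := le_antisymm h3 (sq_nonneg _)
      have h5 := pow_eq_zero_iff two_ne_zero |>.mp h4
      omega
  -- the λ-equation for s
  have heqs : (-c1 + cγ) * (p : ℂ) + (-cγ) * (q : ℂ) = 0 := by
    have := (hall s).2
    rw [hs, hp, hq] at this
    simpa using this
  -- bounds
  have hple : p ≤ (n : ℤ) := by
    rw [← hc1, ← hp]
    exact Finset.single_le_sum (fun t _ => hnn t 1) (Finset.mem_univ s)
  have hqle : q ≤ (n : ℤ) := by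
    rw [← hc2, ← hq]
    exact Finset.single_le_sum (fun t _ => hnn t 2) (Finset.mem_univ s)
  rcases hcases with hco | hco | hco
  · -- p = q, p ≥ 1, gives c1 = 0
    left
    have hps : 1 ≤ p := by
      rcases Int.lt_or_le 0 p with h' | h'
      · omega
      · exact absurd (vec_eq_zero hs (by omega) (by omega)) (hroot s).1
    have hpc : (p : ℂ) ≠ 0 := Int.cast_ne_zero.mpr (by omega)
    have hcoC : (q : ℂ) = (p : ℂ) := by exact_mod_cast hco.symm
    have : c1 * (p : ℂ) = 0 := by linear_combination -heqs - cγ * hcoC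
    exact (mul_eq_zero.mp this).resolve_right hpc
  · -- q = p + 1 : cγ = -(p c1)
    right
    refine ⟨p.toNat, by omega, Or.inr ?_⟩
    have hcast : ((p.toNat : ℕ) : ℂ) = (p : ℂ) := by
      rw [← Int.cast_natCast, Int.toNat_of_nonneg hp0]
    rw [hcast]
    have hqC : (q : ℂ) = (p : ℂ) + 1 := by
      rw [hco]; push_cast; ring
    linear_combination -heqs - cγ * hqC
  · -- p = q + 1 : cγ = p c1, with edge case p = n
    rcases Int.lt_or_le q ((n : ℤ) - 1) with hqlt | hqge
    · right
      refine ⟨p.toNat, by omega, Or.inl ?_⟩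
      have hcast : ((p.toNat : ℕ) : ℂ) = (p : ℂ) := by
        rw [← Int.cast_natCast, Int.toNat_of_nonneg hp0]
      rw [hcast]
      have hpC : (p : ℂ) = (q : ℂ) + 1 := by
        rw [hco]; push_cast; ring
      linear_combination heqs - cγ * hpC
    · -- q = n - 1, p = n
      have hqn : q = (n : ℤ) - 1 := by omega
      have hpn : p = (n : ℤ) := by omega
      -- all other pieces have middle component 0
      have hsplit1 : β s 1 + ∑ t ∈ Finset.univ.erase s, β t 1 = ∑ t, β t 1 :=
        Finset.add_sum_erase Finset.univ (fun t => β t 1) (Finset.mem_univ s)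
      rw [hc1, hp, hpn] at hsplit1
      have hz : ∑ t ∈ Finset.univ.erase s, β t 1 = 0 := by omega
      have hmid : ∀ t, t ≠ s → β t 1 = 0 := fun t ht =>
        (Finset.sum_eq_zero_iff_of_nonneg (fun t _ => hnn t 1)).mp hz t
          (Finset.mem_erase.mpr ⟨ht, Finset.mem_univ t⟩)
      -- find another piece with last component nonzero
      obtain ⟨u, hu, hu2⟩ : ∃ u ∈ Finset.univ.erase s, β u 2 ≠ 0 := by
        by_contra hzz
        push_neg at hzz
        have hz2 : ∑ t ∈ Finset.univ.erase s, β t 2 = 0 := Finset.sum_eq_zero hzz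
        have hsplit2 : β s 2 + ∑ t ∈ Finset.univ.erase s, β t 2 = ∑ t, β t 2 :=
          Finset.add_sum_erase Finset.univ (fun t => β t 2) (Finset.mem_univ s)
        rw [hc2, hq, hqn, hz2] at hsplit2
        omega
      have hu1 : β u 1 = 0 := hmid u (Finset.mem_erase.mp hu).1
      have hu20 : 1 ≤ β u 2 := by have := hnn u 2; omega
      -- classify β u
      have hBu : ringelSym HD TL (β u) (β u) = 2*(β u 0)^2 + 2*(β u 2)^2 := by
        rw [B_self_val, hu1]; ring
      have hx2 : β u 2 = 1 := by
        rcases (hroot u).2 with h2 | h2 <;> rw [hBu] at h2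
        · have : β u 2 ≤ 1 := by
            nlinarith [sq_nonneg (β u 0), sq_nonneg (β u 2 - 1)]
          omega
        · exfalso
          nlinarith [sq_nonneg (β u 0), sq_nonneg (β u 2 - 1)]
      have hx0 : β u 0 = 0 := by
        rcases (hroot u).2 with h2 | h2 <;> rw [hBu, hx2] at h2
        · have hsq : (β u 0)^2 = 0 := by linarith
          exact pow_eq_zero_iff (two_ne_zero) |>.mp hsq
        · exfalso; nlinarith [sq_nonneg (β u 0)]
      -- λ-equation for u gives cγ = 0
      have heq := (hall u).2
      rw [hu1, hx0, hx2] at heq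
      have hcγ : cγ = 0 := by simpa using heq
      right
      exact ⟨0, by omega, Or.inl (by rw [hcγ]; simp)⟩

/-- Combinatorial smoothness criterion for the centre of the rational Cherednik algebra
of type `B_n` (`t = 0`), via the quiver `∞ → 0 ⇄ 1` (vertices indexed `0, 1, 2`) at
parameter `λ'(c) = (n c₁, −c₁ + c_γ, −c_γ)`: for `(c₁, c_γ) ≠ (0, 0)`, the dimension
vector `(1, n, n)` admits a decomposition into two or more positive roots `β` with
`λ'(c)·β = 0` exactly when `c₁ = 0` or `c_γ = ±m c₁` for some integer `0 ≤ m ≤ n − 1`. -/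
theorem typeB_singular_criterion (n : ℕ) (hn : 2 ≤ n) (c1 cγ : ℂ)
    (hc : ¬(c1 = 0 ∧ cγ = 0)) :
    (∃ (r : ℕ), 2 ≤ r ∧ ∃ β : Fin r → (Fin 3 → ℤ),
        (∀ t : Fin r,
          IsPosRoot (![1, 2, 2] : Fin 3 → Fin 3) ![0, 1, 1] (β t) ∧
          (n : ℂ) * c1 * (β t 0 : ℂ) + (-c1 + cγ) * (β t 1 : ℂ) +
            (-cγ) * (β t 2 : ℂ) = 0) ∧
        ∑ t : Fin r, β t = ![1, (n : ℤ), (n : ℤ)]) ↔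
      (c1 = 0 ∨ ∃ m : ℕ, m ≤ n - 1 ∧ (cγ = (m : ℂ) * c1 ∨ cγ = -((m : ℂ) * c1))) := by
  constructor
  · exact fun h => forward_dir n hn c1 cγ h
  · rintro (h1 | ⟨m, hm, hcγ | hcγ⟩)
    · exact constructA n hn c1 cγ h1
    · rcases Nat.eq_zero_or_pos m with rfl | hm1
      · apply constructC n hn c1 cγ 0 (by omega)
        rw [hcγ]; norm_num
      · exact constructB n hn c1 cγ m hm1 hm hcγ
    · exact constructC n hn c1 cγ m hm hcγ
end
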